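/- arXiv:2110.00750 — 2 statements merged into one kernel-verified Lean document; each statement's English description precedes it below -/
import Mathlib

section
/- Bihari's inequality: let u, f : [0, ∞) → [0, ∞) be continuous, w : [0, ∞) → [0, ∞) continuous nondecreasing with w(u) > 0 on (0, ∞), and α ≥ 0. If u(t) ≤ α + ∫₀ᵗ f(s) w(u(s)) ds for all t ≥ 0, and setting G(x) = ∫_{x₀}^x dy / w(y) for some fixed x₀ > 0, then u(t) ≤ G^{-1}( G(α) + ∫₀ᵗ f(s) ds ) for all t such that G(α) + ∫₀ᵗ f(s) ds lies in the domain of G^{-1}. -/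
set_option maxHeartbeats 1000000

open Set MeasureTheory intervalIntegral Filter Topology

/-- Bihari's inequality: if `u(t) ≤ α + ∫₀ᵗ f(s) w(u(s)) ds` with `w` continuous
nondecreasing and positive on `(0,∞)`, and `G(x) = ∫_{x₀}^x dy/w(y)`, then
`u(t) ≤ G⁻¹(G(α) + ∫₀ᵗ f(s) ds)` whenever the latter is defined, i.e. whenever some
`z > 0` satisfies `G(z) = G(α) + ∫₀ᵗ f(s) ds`, one has `u(t) ≤ z`. -/
theorem bihari_inequality (u f w : ℝ → ℝ) (α x₀ : ℝ)
    (hu_cont : ContinuousOn u (Set.Ici 0))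
    (hf_cont : ContinuousOn f (Set.Ici 0))
    (hu_nonneg : ∀ t, 0 ≤ t → 0 ≤ u t)
    (hf_nonneg : ∀ t, 0 ≤ t → 0 ≤ f t)
    (hw_cont : ContinuousOn w (Set.Ici 0))
    (hw_mono : MonotoneOn w (Set.Ici 0))
    (hw_pos : ∀ r, 0 < r → 0 < w r)
    (hα : 0 ≤ α) (hx₀ : 0 < x₀)
    (hmain : ∀ t, 0 ≤ t → u t ≤ α + ∫ s in (0:ℝ)..t, f s * w (u s)) :
    ∀ t, 0 ≤ t → ∀ z, 0 < z →
      (∫ y in x₀..z, 1 / w y) = (∫ y in x₀..α, 1 / w y) + ∫ s in (0:ℝ)..t, f s →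
      u t ≤ z := by
  intro t ht z hz hGz
  by_contra hcon
  push_neg at hcon
  -- Notation
  set G : ℝ → ℝ := fun x => ∫ y in x₀..x, 1 / w y with hGdef
  set Ft : ℝ := ∫ s in (0:ℝ)..t, f s with hFtdef
  -- Basic facts about w and 1/w
  have hwc : ∀ x : ℝ, 0 < x → ContinuousAt w x := fun x hx =>
    hw_cont.continuousAt (Ici_mem_nhds hx)
  have hic : ∀ x : ℝ, 0 < x → ContinuousAt (fun y => 1 / w y) x := fun x hx =>
    continuousAt_const.div (hwc x hx) (ne_of_gt (hw_pos x hx))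
  have hicOn : ContinuousOn (fun y => 1 / w y) (Ioi 0) := fun x hx =>
    (hic x hx).continuousWithinAt
  have hw0 : 0 ≤ w 0 := by
    have h1 : Tendsto w (𝓝[>] (0:ℝ)) (𝓝 (w 0)) :=
      (hw_cont 0 self_mem_Ici).mono_left (nhdsWithin_mono 0 Ioi_subset_Ici_self)
    exact ge_of_tendsto h1 (eventually_nhdsWithin_of_forall fun r hr => (hw_pos r hr).le)
  have hwnn : ∀ r : ℝ, 0 ≤ r → 0 ≤ w r := fun r hr =>
    hw0.trans (hw_mono self_mem_Ici hr hr)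
  have hiI : ∀ a b : ℝ, 0 < a → 0 < b → IntervalIntegrable (fun y => 1 / w y) volume a b := by
    intro a b ha hb
    apply ContinuousOn.intervalIntegrable
    exact hicOn.mono fun y hy => lt_of_lt_of_le (lt_min ha hb) hy.1
  have hGadd : ∀ a b : ℝ, 0 < a → 0 < b → G b = G a + ∫ y in a..b, 1 / w y := by
    intro a b ha hb
    exact (integral_add_adjacent_intervals (hiI x₀ a hx₀ ha) (hiI a b ha hb)).symm
  have hGmono : ∀ a b : ℝ, 0 < a → a ≤ b → G a ≤ G b := by
    intro a b ha hab
    rw [hGadd a b ha (lt_of_lt_of_le ha hab)]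
    have h1 : 0 ≤ ∫ y in a..b, 1 / w y :=
      intervalIntegral.integral_nonneg hab fun y hy =>
        div_nonneg zero_le_one (hwnn y (le_trans ha.le hy.1))
    linarith
  have hGstrict : ∀ a b : ℝ, 0 < a → a < b → G a < G b := by
    intro a b ha hab
    rw [hGadd a b ha (ha.trans hab)]
    have h1 : 0 < ∫ y in a..b, 1 / w y := by
      apply intervalIntegral_pos_of_pos_on (hiI a b ha (ha.trans hab))
        (fun x hx => div_pos one_pos (hw_pos x (ha.trans hx.1))) hab
    linarith
  have hGderiv : ∀ x : ℝ, 0 < x → HasDerivAt G (1 / w x) x := fun x hx =>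
    integral_hasDerivAt_right (hiI x₀ x hx₀ hx)
      (ContinuousOn.stronglyMeasurableAtFilter isOpen_Ioi hicOn x hx) (hic x hx)
  -- The integrand g = f * (w ∘ u)
  set g : ℝ → ℝ := fun s => f s * w (u s) with hgdef
  have hg_cont : ContinuousOn g (Ici 0) :=
    hf_cont.mul (hw_cont.comp hu_cont fun s hs => hu_nonneg s hs)
  have hg_nonneg : ∀ s : ℝ, 0 ≤ s → 0 ≤ g s := fun s hs =>
    mul_nonneg (hf_nonneg s hs) (hwnn (u s) (hu_nonneg s hs))
  have hg_int : ∀ a b : ℝ, 0 ≤ a → 0 ≤ b → IntervalIntegrable g volume a b := by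
    intro a b ha hb
    exact (hg_cont.mono fun y hy => le_trans (le_min ha hb) hy.1).intervalIntegrable
  have hf_int : ∀ a b : ℝ, 0 ≤ a → 0 ≤ b → IntervalIntegrable f volume a b := by
    intro a b ha hb
    exact (hf_cont.mono fun y hy => le_trans (le_min ha hb) hy.1).intervalIntegrable
  set I : ℝ := ∫ s in (0:ℝ)..t, g s with hIdef
  have hI : 0 ≤ I := intervalIntegral.integral_nonneg ht fun s hs => hg_nonneg s hs.1
  set B : ℝ := α + I with hBdef
  have huB : u t ≤ B := hmain t ht
  have hzB : z < B := lt_of_lt_of_le hcon huB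
  have hBpos : 0 < B := hz.trans hzB
  -- key inequality
  have key : ∀ ε : ℝ, 0 < ε → G (B + ε) ≤ G (α + ε) + Ft := by
    intro ε hε
    set V : ℝ → ℝ := fun s => α + ε + ∫ r in (0:ℝ)..s, g r with hVdef
    have hVval : ∀ s : ℝ, 0 ≤ s → ε ≤ V s := by
      intro s hs
      have h1 : 0 ≤ ∫ r in (0:ℝ)..s, g r :=
        intervalIntegral.integral_nonneg hs fun r hr => hg_nonneg r hr.1
      have : V s = α + ε + ∫ r in (0:ℝ)..s, g r := rfl
      rw [this]; linarith
    have hVpos : ∀ s : ℝ, 0 ≤ s → 0 < V s := fun s hs => lt_of_lt_of_le hε (hVval s hs)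
    have huV : ∀ s : ℝ, 0 ≤ s → u s ≤ V s := by
      intro s hs
      have h1 := hmain s hs
      have : V s = α + ε + ∫ r in (0:ℝ)..s, g r := rfl
      rw [this]
      calc u s ≤ α + ∫ r in (0:ℝ)..s, g r := h1
        _ ≤ α + ε + ∫ r in (0:ℝ)..s, g r := by linarith
    have hVderiv : ∀ s ∈ Ioo 0 t, HasDerivAt V (g s) s := by
      intro s hs
      have h1 : HasDerivAt (fun r => ∫ x in (0:ℝ)..r, g x) (g s) s :=
        integral_hasDerivAt_right (hg_int 0 s le_rfl hs.1.le)
          (ContinuousOn.stronglyMeasurableAtFilter isOpen_Ioi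
            (hg_cont.mono Ioi_subset_Ici_self) s hs.1)
          (hg_cont.continuousAt (Ici_mem_nhds hs.1))
      exact h1.const_add (α + ε)
    set H : ℝ → ℝ := fun s => G (V s) - ∫ r in (0:ℝ)..s, f r with hHdef
    -- continuity of H on Icc 0 t
    have hVcont : ContinuousOn V (Icc 0 t) := by
      apply continuousOn_const.add
      have h1 : IntegrableOn g (uIcc 0 t) volume := by
        rw [uIcc_of_le ht]
        exact (hg_cont.mono Icc_subset_Ici_self).integrableOn_Icc
      have := intervalIntegral.continuousOn_primitive_interval h1
      rwa [uIcc_of_le ht] at this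
    have hFcont : ContinuousOn (fun s => ∫ r in (0:ℝ)..s, f r) (Icc 0 t) := by
      have h1 : IntegrableOn f (uIcc 0 t) volume := by
        rw [uIcc_of_le ht]
        exact (hf_cont.mono Icc_subset_Ici_self).integrableOn_Icc
      have := intervalIntegral.continuousOn_primitive_interval h1
      rwa [uIcc_of_le ht] at this
    have hHcont : ContinuousOn H (Icc 0 t) := by
      apply ContinuousOn.sub _ hFcont
      intro s hs
      exact ((hGderiv (V s) (hVpos s hs.1)).continuousAt).comp_continuousWithinAt
        (hVcont s hs)
    -- derivative of H
    have hHderiv : ∀ s ∈ Ioo 0 t, HasDerivAt H (1 / w (V s) * g s - f s) s := by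
      intro s hs
      have h2 : HasDerivAt (fun r => G (V r)) (1 / w (V s) * g s) s :=
        (hGderiv (V s) (hVpos s hs.1.le)).comp s (hVderiv s hs)
      have h3 : HasDerivAt (fun r => ∫ x in (0:ℝ)..r, f x) (f s) s := by
        exact integral_hasDerivAt_right (hf_int 0 s le_rfl hs.1.le)
          (ContinuousOn.stronglyMeasurableAtFilter isOpen_Ioi
            (hf_cont.mono Ioi_subset_Ici_self) s hs.1)
          (hf_cont.continuousAt (Ici_mem_nhds hs.1))
      exact h2.sub h3
    have hderiv_nonpos : ∀ s ∈ Ioo 0 t, deriv H s ≤ 0 := by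
      intro s hs
      rw [(hHderiv s hs).deriv]
      have hus : u s ≤ V s := huV s hs.1.le
      have hwu : w (u s) ≤ w (V s) :=
        hw_mono (hu_nonneg s hs.1.le) (hVpos s hs.1.le).le hus
      have hwV : 0 < w (V s) := hw_pos _ (hVpos s hs.1.le)
      have hgs : g s = f s * w (u s) := rfl
      have h4 : f s * w (u s) ≤ f s * w (V s) :=
        mul_le_mul_of_nonneg_left hwu (hf_nonneg s hs.1.le)
      have h5 : 1 / w (V s) * g s ≤ f s := by
        rw [hgs]
        calc 1 / w (V s) * (f s * w (u s)) ≤ 1 / w (V s) * (f s * w (V s)) := by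
              apply mul_le_mul_of_nonneg_left h4
              positivity
          _ = f s := by field_simp
      linarith
    have hH_anti : AntitoneOn H (Icc 0 t) := by
      apply antitoneOn_of_deriv_nonpos (convex_Icc 0 t) hHcont
      · rw [interior_Icc]
        exact fun s hs => ((hHderiv s hs).differentiableAt).differentiableWithinAt
      · rw [interior_Icc]
        exact hderiv_nonpos
    have hHt : H t ≤ H 0 := hH_anti (left_mem_Icc.2 ht) (right_mem_Icc.2 ht) ht
    have hH0 : H 0 = G (α + ε) := by
      have hV0 : V 0 = α + ε := by
        have : V 0 = α + ε + ∫ r in (0:ℝ)..(0:ℝ), g r := rfl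
        rw [this, intervalIntegral.integral_same, add_zero]
      have : H 0 = G (V 0) - ∫ r in (0:ℝ)..(0:ℝ), f r := rfl
      rw [this, hV0, intervalIntegral.integral_same, sub_zero]
    have hHt' : H t = G (B + ε) - Ft := by
      have hVt : V t = B + ε := by
        have : V t = α + ε + I := rfl
        rw [this, hBdef]; ring
      have : H t = G (V t) - Ft := rfl
      rw [this, hVt]
    rw [hHt', hH0] at hHt
    linarith
  -- limit of G (α + ε) as ε → 0⁺
  have keyB : ∀ ε : ℝ, 0 < ε → G B ≤ G (α + ε) + Ft := fun ε hε =>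
    le_trans (hGmono B (B + ε) hBpos (by linarith)) (key ε hε)
  have hlim : Tendsto (fun ε : ℝ => G (α + ε)) (𝓝[>] (0:ℝ)) (𝓝 (G α)) := by
    rcases hα.lt_or_eq with hαpos | hα0
    · have h1 : Tendsto (fun ε : ℝ => α + ε) (𝓝[>] (0:ℝ)) (𝓝 α) := by
        have h2 : Tendsto (fun ε : ℝ => α + ε) (𝓝 (0:ℝ)) (𝓝 (α + 0)) :=
          tendsto_const_nhds.add tendsto_id
        rw [add_zero] at h2
        exact h2.mono_left nhdsWithin_le_nhds
      exact ((hGderiv α hαpos).continuousAt.tendsto).comp h1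
    · subst hα0
      have hbound : ∀ ε : ℝ, 0 < ε → ε ≤ x₀ → (∫ y in Ioc ε x₀, ‖1 / w y‖) ≤ Ft - G B := by
        intro ε hε hεx
        have h1 := keyB ε hε
        rw [zero_add] at h1
        have h2 : G x₀ = G ε + ∫ y in ε..x₀, 1 / w y := hGadd ε x₀ hε hx₀
        have h3 : G x₀ = 0 := intervalIntegral.integral_same
        have h4 : (∫ y in ε..x₀, 1 / w y) ≤ Ft - G B := by linarith
        have h5 : (∫ y in Ioc ε x₀, ‖1 / w y‖) = ∫ y in ε..x₀, 1 / w y := by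
          rw [intervalIntegral.integral_of_le hεx]
          apply setIntegral_congr_fun measurableSet_Ioc
          intro y hy
          have hwy : 0 < w y := hw_pos y (hε.trans hy.1)
          have : (0:ℝ) ≤ 1 / w y := div_nonneg zero_le_one hwy.le
          show ‖1 / w y‖ = 1 / w y
          rw [Real.norm_eq_abs, abs_of_nonneg this]
        rw [h5]; exact h4
      have hpos : ∀ n : ℕ, 0 < x₀ / ((n:ℝ) + 1) := fun n => by positivity
      have hle : ∀ n : ℕ, x₀ / ((n:ℝ) + 1) ≤ x₀ := fun n =>
        div_le_self hx₀.le (by simp)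
      have hInt : IntegrableOn (fun y => 1 / w y) (Ioc (0:ℝ) x₀) volume := by
        have hfi : ∀ n : ℕ, IntegrableOn (fun y => 1 / w y)
            (Ioc (x₀ / ((n:ℝ) + 1)) x₀) volume := by
          intro n
          rw [← intervalIntegrable_iff_integrableOn_Ioc_of_le (hle n)]
          exact hiI _ x₀ (hpos n) hx₀
        have hta : Tendsto (fun n : ℕ => x₀ / ((n:ℝ) + 1)) atTop (𝓝 0) := by
          have := tendsto_one_div_add_atTop_nhds_zero_nat.const_mul x₀
          rw [mul_zero] at this
          refine this.congr fun n => ?_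
          rw [mul_one_div]
        exact integrableOn_Ioc_of_intervalIntegral_norm_bounded_left hfi hta
          (Eventually.of_forall fun n => hbound _ (hpos n) (hle n))
      have hx₀0 : IntervalIntegrable (fun y => 1 / w y) volume x₀ 0 :=
        ((intervalIntegrable_iff_integrableOn_Ioc_of_le hx₀.le).2 hInt).symm
      have hGeps : ∀ ε ∈ Ioc (0:ℝ) x₀, G ε = G 0 + ∫ y in (0:ℝ)..ε, 1 / w y := by
        intro ε hε
        refine (integral_add_adjacent_intervals hx₀0 ?_).symm
        rw [intervalIntegrable_iff_integrableOn_Ioc_of_le hε.1.le]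
        exact hInt.mono_set (Ioc_subset_Ioc_right hε.2)
      have hIcc : IntegrableOn (fun y => 1 / w y) (uIcc (0:ℝ) x₀) volume := by
        rw [uIcc_of_le hx₀.le, integrableOn_Icc_iff_integrableOn_Ioc]
        exact hInt
      have hPcont := intervalIntegral.continuousOn_primitive_interval hIcc
      have hP0 : Tendsto (fun ε => ∫ y in (0:ℝ)..ε, 1 / w y) (𝓝[>] (0:ℝ)) (𝓝 0) := by
        have h1 := hPcont 0 left_mem_uIcc
        rw [ContinuousWithinAt, intervalIntegral.integral_same] at h1
        have h2 : 𝓝[>] (0:ℝ) ≤ 𝓝[uIcc (0:ℝ) x₀] 0 := by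
          rw [uIcc_of_le hx₀.le, ← nhdsWithin_Ioc_eq_nhdsGT hx₀]
          exact nhdsWithin_mono 0 Ioc_subset_Icc_self
        exact h1.mono_left h2
      have hcongr : ∀ᶠ ε in 𝓝[>] (0:ℝ),
          G 0 + (∫ y in (0:ℝ)..ε, 1 / w y) = G (0 + ε) := by
        filter_upwards [Ioc_mem_nhdsGT hx₀] with ε hε
        rw [zero_add]
        exact (hGeps ε hε).symm
      have h3 : Tendsto (fun ε => G 0 + ∫ y in (0:ℝ)..ε, 1 / w y) (𝓝[>] (0:ℝ))
          (𝓝 (G 0)) := by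
        have := Tendsto.add
          (tendsto_const_nhds : Tendsto (fun _ : ℝ => G 0) (𝓝[>] (0:ℝ)) (𝓝 (G 0))) hP0
        rwa [add_zero] at this
      exact Tendsto.congr' hcongr h3
  have hfin : G B ≤ G α + Ft := by
    refine ge_of_tendsto (hlim.add tendsto_const_nhds) ?_
    exact eventually_nhdsWithin_of_forall fun ε hε => keyB ε hε
  have hGzB : G z < G B := hGstrict z B hz hzB
  have hGz' : G z = G α + Ft := hGz
  linarith
end

section
/- Zero version of Bihari's inequality: let u : [0, T] → [0, ∞) be continuous, C ≥ 0, and ρ : [0, ∞) → [0, ∞) continuous, concave, nondecreasing with ρ(0) = 0, ρ(r) > 0 for r > 0, and ∫_{0⁺} dr/ρ(r) = +∞. If u(t) ≤ C ∫_t^T ρ(u(s)) ds for all t ∈ [0, T], then u ≡ 0 on [0, T]. -/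
open MeasureTheory Set intervalIntegral Topology Filter

/-!
Put `v t = C ∫_t^T ρ(u s) ds`, so that `u ≤ v`, `v` is nonincreasing with `v T = 0`, and
`v' = -C ρ(u) ≥ -C ρ(v)`. Wherever `v > 0` this makes `t ↦ ∫_{v t₀}^{v t} dr/ρ(r) + C t`
nondecreasing. If `v t₀ = c > 0`, then `v` takes every value `x ∈ (0, c]` after `t₀`, hence
`∫_x^c dr/ρ(r) ≤ C T` uniformly in `x`, and `1/ρ` would be integrable near `0`.
-/

section Primitive

variable {f : ℝ → ℝ} {a b : ℝ}

lemma continuousOn_integral_left_of_continuousOn (hab : a ≤ b) (hf : ContinuousOn f (Icc a b)) :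
    ContinuousOn (fun t => ∫ s in t..b, f s) (Icc a b) := by
  have h := continuousOn_primitive_interval_left (μ := volume)
    (by rw [uIcc_of_le hab]; exact hf.integrableOn_Icc)
  rwa [uIcc_of_le hab] at h

lemma hasDerivAt_integral_left_of_continuousOn (hf : ContinuousOn f (Icc a b)) {t : ℝ}
    (ht : t ∈ Ioo a b) : HasDerivAt (fun x => ∫ s in x..b, f s) (-f t) t :=
  integral_hasDerivAt_left
    ((hf.mono (uIcc_subset_Icc (Ioo_subset_Icc_self ht) (right_mem_Icc.2 (ht.1.trans ht.2).le))
      ).intervalIntegrable)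
    ((hf.mono Ioo_subset_Icc_self).stronglyMeasurableAtFilter isOpen_Ioo t ht)
    (hf.continuousAt (Icc_mem_nhds ht.1 ht.2))

lemma hasDerivAt_integral_right_of_continuousOn {s : Set ℝ} (hs : IsOpen s) [s.OrdConnected]
    (hf : ContinuousOn f s) (ha : a ∈ s) {x : ℝ} (hx : x ∈ s) :
    HasDerivAt (fun y => ∫ r in a..y, f r) (f x) x :=
  integral_hasDerivAt_right ((hf.mono (Set.OrdConnected.uIcc_subset ‹_› ha hx)).intervalIntegrable)
    (hf.stronglyMeasurableAtFilter hs x hx) (hf.continuousAt (hs.mem_nhds hx))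

lemma antitoneOn_integral_left_of_nonneg (hab : a ≤ b) (hf : ContinuousOn f (Icc a b))
    (hf_nonneg : ∀ t ∈ Icc a b, 0 ≤ f t) :
    AntitoneOn (fun t => ∫ s in t..b, f s) (Icc a b) := by
  refine antitoneOn_of_hasDerivWithinAt_nonpos (convex_Icc a b) (f' := fun t => -f t)
    (continuousOn_integral_left_of_continuousOn hab hf) (fun t ht => ?_) fun t ht => ?_
  all_goals rw [interior_Icc] at ht
  · exact (hasDerivAt_integral_left_of_continuousOn hf ht).hasDerivWithinAt
  · exact neg_nonpos.2 (hf_nonneg t (Ioo_subset_Icc_self ht))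

end Primitive

lemma intervalIntegrable_of_integral_le_of_nonneg {g : ℝ → ℝ} {a b M : ℝ} (hab : a < b)
    (hg : ∀ x ∈ Ioc a b, IntervalIntegrable g volume x b) (hg_nonneg : ∀ x ∈ Ioc a b, 0 ≤ g x)
    (hM : ∀ x ∈ Ioc a b, ∫ y in x..b, g y ≤ M) : IntervalIntegrable g volume a b := by
  obtain ⟨x, -, hx_mem, hx_lim⟩ := exists_seq_strictAnti_tendsto' hab
  have hx_mem' : ∀ n, x n ∈ Ioc a b := fun n => Ioo_subset_Ioc_self (hx_mem n)
  rw [intervalIntegrable_iff_integrableOn_Ioc_of_le hab.le]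
  refine integrableOn_Ioc_of_intervalIntegral_norm_bounded_left (I := M)
    (fun n => (intervalIntegrable_iff_integrableOn_Ioc_of_le (hx_mem' n).2).1 (hg _ (hx_mem' n)))
    hx_lim (Eventually.of_forall fun n => ?_)
  have hnorm : ∫ y in Ioc (x n) b, ‖g y‖ = ∫ y in Ioc (x n) b, g y :=
    setIntegral_congr_fun measurableSet_Ioc fun y hy =>
      Real.norm_of_nonneg (hg_nonneg y ⟨(hx_mem' n).1.trans hy.1, hy.2⟩)
  rw [hnorm, ← integral_of_le (hx_mem' n).2]
  exact hM _ (hx_mem' n)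

section Osgood

variable {ρ : ℝ → ℝ}

lemma continuousOn_one_div_of_pos (hρ : ContinuousOn ρ (Ioi 0)) (hρ_pos : ∀ r, 0 < r → 0 < ρ r) :
    ContinuousOn (fun r => 1 / ρ r) (Ioi 0) :=
  continuousOn_const.div hρ fun r hr => (hρ_pos r hr).ne'

/-- Separation of variables for the differential inequality `v' ≥ -C ρ(v)`. -/
lemma integral_one_div_le_of_hasDerivAt {v v' : ℝ → ℝ} {a b C : ℝ} (hab : a ≤ b)
    (hρ : ContinuousOn ρ (Ioi 0)) (hρ_pos : ∀ r, 0 < r → 0 < ρ r)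
    (hv : ContinuousOn v (Icc a b)) (hv_pos : ∀ t ∈ Icc a b, 0 < v t)
    (hv' : ∀ t ∈ Ioo a b, HasDerivAt v (v' t) t) (hv'_ge : ∀ t ∈ Ioo a b, -(C * ρ (v t)) ≤ v' t) :
    ∫ r in v b..v a, 1 / ρ r ≤ C * (b - a) := by
  set Φ : ℝ → ℝ := fun y => ∫ r in v a..y, 1 / ρ r
  have hΦ : ∀ y, 0 < y → HasDerivAt Φ (1 / ρ y) y := fun y hy =>
    hasDerivAt_integral_right_of_continuousOn isOpen_Ioi (continuousOn_one_div_of_pos hρ hρ_pos)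
      (hv_pos a (left_mem_Icc.2 hab)) hy
  have hmono : MonotoneOn (fun t => Φ (v t) + C * t) (Icc a b) := by
    refine monotoneOn_of_hasDerivWithinAt_nonneg (convex_Icc a b)
      (f' := fun t => 1 / ρ (v t) * v' t + C) ?_ (fun t ht => ?_) (fun t ht => ?_)
    · refine ContinuousOn.add (fun t ht => ?_) (continuousOn_const.mul continuousOn_id)
      exact (hΦ _ (hv_pos t ht)).continuousAt.comp_continuousWithinAt (hv t ht)
    · rw [interior_Icc] at ht
      exact (((hΦ _ (hv_pos t (Ioo_subset_Icc_self ht))).comp t (hv' t ht)).add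
        ((hasDerivAt_id t).const_mul C |>.congr_deriv (mul_one C))).hasDerivWithinAt
    · rw [interior_Icc] at ht
      have hρt := hρ_pos _ (hv_pos t (Ioo_subset_Icc_self ht))
      have h : -C ≤ v' t / ρ (v t) := by
        rw [le_div_iff₀ hρt]
        linarith [hv'_ge t ht]
      rw [one_div_mul_eq_div]
      linarith
  have h := hmono (left_mem_Icc.2 hab) (right_mem_Icc.2 hab) hab
  simp only [Φ, integral_same] at h
  rw [integral_symm]
  linarith

lemma integral_one_div_le_of_le_mul_integral {T C : ℝ} {u : ℝ → ℝ} (hC : 0 ≤ C)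
    (hu_cont : ContinuousOn u (Icc 0 T)) (hu_nonneg : ∀ t ∈ Icc 0 T, 0 ≤ u t)
    (hρ_cont : ContinuousOn ρ (Ici 0)) (hρ_mono : MonotoneOn ρ (Ici 0)) (hρ0 : ρ 0 = 0)
    (hρ_pos : ∀ r, 0 < r → 0 < ρ r) (hu_le : ∀ t ∈ Icc 0 T, u t ≤ C * ∫ s in t..T, ρ (u s))
    {t₀ x : ℝ} (ht₀ : t₀ ∈ Icc 0 T) (hx : x ∈ Ioc 0 (C * ∫ s in t₀..T, ρ (u s))) :
    ∫ r in x..C * ∫ s in t₀..T, ρ (u s), 1 / ρ r ≤ C * T := by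
  set v : ℝ → ℝ := fun t => C * ∫ s in t..T, ρ (u s)
  have hf : ContinuousOn (fun s => ρ (u s)) (Icc 0 T) := hρ_cont.comp hu_cont hu_nonneg
  have hv_cont : ContinuousOn v (Icc 0 T) :=
    continuousOn_const.mul (continuousOn_integral_left_of_continuousOn (ht₀.1.trans ht₀.2) hf)
  have hv_anti : AntitoneOn v (Icc 0 T) := fun s hs t ht hst =>
    mul_le_mul_of_nonneg_left (antitoneOn_integral_left_of_nonneg (ht₀.1.trans ht₀.2) hf
      (fun t ht => hρ0 ▸ hρ_mono self_mem_Ici (hu_nonneg t ht) (hu_nonneg t ht)) hs ht hst) hC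
  have hv'_ge : ∀ t ∈ Ioo 0 T, -(C * ρ (v t)) ≤ C * -ρ (u t) := fun t ht => by
    have ht' := Ioo_subset_Icc_self ht
    have := hρ_mono (hu_nonneg t ht') ((hu_nonneg t ht').trans (hu_le t ht')) (hu_le t ht')
    nlinarith
  obtain ⟨t', ht', rfl⟩ : x ∈ v '' Icc t₀ T :=
    intermediate_value_Icc' ht₀.2 (hv_cont.mono (Icc_subset_Icc_left ht₀.1))
      ⟨by simpa [v] using hx.1.le, hx.2⟩
  have hsub : Icc t₀ t' ⊆ Icc 0 T := Icc_subset_Icc ht₀.1 ht'.2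
  have hbound := integral_one_div_le_of_hasDerivAt ht'.1 (hρ_cont.mono Ioi_subset_Ici_self)
    hρ_pos (hv_cont.mono hsub)
    (fun t ht => hx.1.trans_le (hv_anti (hsub ht) (hsub (right_mem_Icc.2 ht'.1)) ht.2))
    (fun t ht => (hasDerivAt_integral_left_of_continuousOn hf
      (Ioo_subset_Ioo ht₀.1 ht'.2 ht)).const_mul C)
    (fun t ht => hv'_ge t (Ioo_subset_Ioo ht₀.1 ht'.2 ht))
  nlinarith [ht₀.1, ht'.2]

end Osgood

theorem bihari_zero_version_general (T C : ℝ) (u ρ : ℝ → ℝ)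
    (hC : 0 ≤ C)
    (hu_cont : ContinuousOn u (Set.Icc 0 T))
    (hu_nonneg : ∀ t ∈ Set.Icc (0:ℝ) T, 0 ≤ u t)
    (hρ_cont : ContinuousOn ρ (Set.Ici 0))
    (hρ_mono : MonotoneOn ρ (Set.Ici 0))
    (hρ0 : ρ 0 = 0)
    (hρ_pos : ∀ r, 0 < r → 0 < ρ r)
    (hOsgood : ∀ a, 0 < a →
      ¬ IntervalIntegrable (fun r => 1 / ρ r) MeasureTheory.volume 0 a)
    (hmain : ∀ t ∈ Set.Icc (0:ℝ) T, u t ≤ C * ∫ s in t..T, ρ (u s)) :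
    ∀ t ∈ Set.Icc (0:ℝ) T, u t = 0 := by
  intro t₀ ht₀
  by_contra hne
  have hc : 0 < C * ∫ s in t₀..T, ρ (u s) :=
    (lt_of_le_of_ne (hu_nonneg t₀ ht₀) (Ne.symm hne)).trans_le (hmain t₀ ht₀)
  have h1ρ := continuousOn_one_div_of_pos (hρ_cont.mono Ioi_subset_Ici_self) hρ_pos
  refine hOsgood _ hc (intervalIntegrable_of_integral_le_of_nonneg hc (M := C * T) ?_ ?_ ?_)
  · exact fun x hx => (h1ρ.mono fun r hr => (lt_min hx.1 hc).trans_le hr.1).intervalIntegrable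
  · exact fun x hx => (one_div_pos.2 (hρ_pos x hx.1)).le
  · exact fun x hx => integral_one_div_le_of_le_mul_integral hC hu_cont hu_nonneg hρ_cont
      hρ_mono hρ0 hρ_pos hmain ht₀ hx

/-- Zero version of Bihari's inequality: if `u(t) ≤ C ∫_t^T ρ(u(s)) ds` on `[0,T]` with
`ρ` continuous, concave, nondecreasing, `ρ(0) = 0`, `ρ > 0` on `(0,∞)`, and
`∫_{0⁺} dr/ρ(r) = +∞`, then `u ≡ 0` on `[0,T]`. -/
theorem bihari_zero_version (T C : ℝ) (u ρ : ℝ → ℝ)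
    (hT : 0 ≤ T) (hC : 0 ≤ C)
    (hu_cont : ContinuousOn u (Set.Icc 0 T))
    (hu_nonneg : ∀ t ∈ Set.Icc (0:ℝ) T, 0 ≤ u t)
    (hρ_cont : ContinuousOn ρ (Set.Ici 0))
    (hρ_conc : ConcaveOn ℝ (Set.Ici 0) ρ)
    (hρ_mono : MonotoneOn ρ (Set.Ici 0))
    (hρ0 : ρ 0 = 0)
    (hρ_pos : ∀ r, 0 < r → 0 < ρ r)
    (hOsgood : ∀ a, 0 < a →
      ¬ IntervalIntegrable (fun r => 1 / ρ r) MeasureTheory.volume 0 a)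
    (hmain : ∀ t ∈ Set.Icc (0:ℝ) T, u t ≤ C * ∫ s in t..T, ρ (u s)) :
    ∀ t ∈ Set.Icc (0:ℝ) T, u t = 0 :=
  bihari_zero_version_general T C u ρ hC hu_cont hu_nonneg hρ_cont hρ_mono hρ0 hρ_pos hOsgood hmain
end
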